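/- arXiv:2411.07094 — 2 statements merged into one kernel-verified Lean document; each statement's English description precedes it below -/
import Mathlib

section
/- Let n ≥ 2 be an integer, μ ∈ ℝ, L > 0, and let x = (x_1,…,x_n) and x' = (x'_1,…,x'_n) be vectors in [μ−L, μ+L]^n that differ in exactly one coordinate. Let 0 < ε ≤ 1 and 0 < δ ≤ 1, and set σ_{2,DP}² = 32L⁴·ln(1.25/δ)/ε². Define the unbiased sample variance v(x) = (x_1²+⋯+x_n²)/(n−1) − (x_1+⋯+x_n)²/(n(n−1)). Then for every Borel set S ⊆ ℝ, P_{W∼N(0,σ_{2,DP}²)}( v(x) + W/n ∈ S ) ≤ e^ε · P_{W∼N(0,σ_{2,DP}²)}( v(x') + W/n ∈ S ) + δ. -/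
/-!
Changing one coordinate of `x` from `a` to `b` changes `n · v(x)` by `(a - m)² - (b - m)²`, where
`m` is the mean of the remaining coordinates; as `a`, `b`, `m` lie in `[μ - L, μ + L]`, this change
`t` satisfies `|t| ≤ Δ := 4L²`. The two probabilities are therefore the masses of one set under
`N(t, σ²)` and `N(0, σ²)`, and the claim is the classical Gaussian mechanism bound: off the set
where the privacy loss `(t w - t²/2)/σ²` exceeds `ε` the two densities differ by a factor at most
`e^ε`, and that set is a Gaussian tail whose mass the calibration `σ² = 2Δ² log(1.25/δ)/ε²` keeps
below `δ`, by `P(Z > a) ≤ e^{-a²/2σ²}/2` for `a ≥ 0` (the threshold is negative only when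
`δ > 0.9`, where bounding the density by its peak suffices).
-/

open MeasureTheory ProbabilityTheory Real Set
open scoped NNReal ENNReal BigOperators

section SampleVariance

open Finset

variable {ι : Type*} [Fintype ι]

noncomputable def sampleVariance (x : ι → ℝ) : ℝ :=
  (∑ i, x i ^ 2) / (Fintype.card ι - 1 : ℝ)
    - (∑ i, x i) ^ 2 / ((Fintype.card ι : ℝ) * ((Fintype.card ι : ℝ) - 1))

theorem card_mul_sampleVariance_sub_eq [DecidableEq ι] (hι : 2 ≤ Fintype.card ι)
    {x x' : ι → ℝ} {i : ι} (h : ∀ j, j ≠ i → x j = x' j) :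
    Fintype.card ι * (sampleVariance x - sampleVariance x')
      = (x i - 𝔼 j ∈ univ.erase i, x j) ^ 2 - (x' i - 𝔼 j ∈ univ.erase i, x j) ^ 2 := by
  have hrest (f : ℝ → ℝ) : ∑ j ∈ univ.erase i, f (x' j) = ∑ j ∈ univ.erase i, f (x j) :=
    sum_congr rfl fun j hj => by rw [h j (ne_of_mem_erase hj)]
  have hsum : ∑ j ∈ univ.erase i, x' j = ∑ j ∈ univ.erase i, x j := hrest id
  have hsq : ∑ j ∈ univ.erase i, x' j ^ 2 = ∑ j ∈ univ.erase i, x j ^ 2 := hrest (· ^ 2)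
  have hcard : ((univ.erase i).card : ℝ) = Fintype.card ι - 1 := by
    rw [card_erase_of_mem (mem_univ i), card_univ, Nat.cast_sub (by omega), Nat.cast_one]
  have hn : (2 : ℝ) ≤ Fintype.card ι := by exact_mod_cast hι
  have hn1 : (Fintype.card ι : ℝ) - 1 ≠ 0 := by linarith
  simp only [sampleVariance, expect_eq_sum_div_card, hcard, ← add_sum_erase _ _ (mem_univ i),
    hsum, hsq]
  field_simp
  ring

theorem abs_card_mul_sampleVariance_sub_le (hι : 2 ≤ Fintype.card ι) {x x' : ι → ℝ} {μ L : ℝ}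
    (hx : ∀ j, x j ∈ Icc (μ - L) (μ + L)) (hx' : ∀ j, x' j ∈ Icc (μ - L) (μ + L)) {i : ι}
    (h : ∀ j, j ≠ i → x j = x' j) :
    |Fintype.card ι * (sampleVariance x - sampleVariance x')| ≤ 4 * L ^ 2 := by
  classical
  have hne : (univ.erase i).Nonempty := by
    rw [← card_pos, card_erase_of_mem (mem_univ i), card_univ]
    omega
  set m := 𝔼 j ∈ univ.erase i, x j
  have hm : m ∈ Icc (μ - L) (μ + L) :=
    ⟨le_expect hne fun j _ => (hx j).1, expect_le hne fun j _ => (hx j).2⟩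
  have hdev {a : ℝ} (ha : a ∈ Icc (μ - L) (μ + L)) : (a - m) ^ 2 ≤ 4 * L ^ 2 := by
    have : |a - m| ≤ 2 * L :=
      abs_sub_le_iff.2 ⟨by linarith [ha.2, hm.1], by linarith [ha.1, hm.2]⟩
    nlinarith [abs_nonneg (a - m), sq_abs (a - m)]
  rw [card_mul_sampleVariance_sub_eq hι h]
  exact abs_sub_le_of_nonneg_of_le (sq_nonneg _) (hdev (hx i)) (sq_nonneg _) (hdev (hx' i))

end SampleVariance

namespace MeasureTheory

theorem measure_le_mul_add_of_restrict_compl_le {α : Type*} [MeasurableSpace α]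
    {μ ν : Measure α} {B : Set α} {c : ℝ≥0∞} (h : μ.restrict Bᶜ ≤ c • ν) (A : Set α) :
    μ A ≤ c * ν A + μ B :=
  calc μ A ≤ μ (A ∩ Bᶜ) + μ (A \ Bᶜ) := measure_le_inter_add_sdiff μ A Bᶜ
    _ ≤ μ.restrict Bᶜ A + μ B :=
        add_le_add (Measure.le_restrict_apply _ _) (measure_mono fun _ hx => not_not.1 hx.2)
    _ ≤ c * ν A + μ B := add_le_add (h A) le_rfl

end MeasureTheory

namespace ProbabilityTheory

instance isNegInvariant_gaussianReal_zero (v : ℝ≥0) : (gaussianReal 0 v).IsNegInvariant :=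
  ⟨by rw [Measure.neg_def]; simpa using gaussianReal_map_neg (μ := 0) (v := v)⟩

lemma gaussianReal_apply_eq_preimage_add (m : ℝ) (v : ℝ≥0) (s : Set ℝ) :
    gaussianReal m v s = gaussianReal 0 v ((· + m) ⁻¹' s) := by
  have hshift := gaussianReal_map_add_const (μ := 0) (v := v) m
  rw [zero_add] at hshift
  rw [← hshift]
  exact (MeasurableEquiv.addRight m).map_apply s

lemma gaussianReal_setOf_lt_mul (v : ℝ≥0) (c : ℝ) {t : ℝ} (ht : t ≠ 0) :
    gaussianReal 0 v {z | c < t * z} = gaussianReal 0 v (Ioi (c / |t|)) := by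
  rcases ht.lt_or_gt with hneg | hpos
  · rw [← Measure.measure_neg]
    congr 1
    ext z
    simp [abs_of_neg hneg, div_lt_iff₀ (neg_pos.2 hneg), mul_comm]
  · congr 1
    ext z
    simp [abs_of_pos hpos, div_lt_iff₀' hpos]

lemma gaussianReal_Ioi_self (m : ℝ) {v : ℝ≥0} (hv : v ≠ 0) :
    gaussianReal m v (Ioi m) = 2⁻¹ := by
  have := nullSingletonClass_gaussianReal (μ := 0) hv
  have hsymm : gaussianReal 0 v (Iio 0) = gaussianReal 0 v (Ioi 0) := by
    rw [← Measure.measure_neg, neg_Iio, neg_zero]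
  have htotal : gaussianReal 0 v (Iio 0) + gaussianReal 0 v (Ioi 0) = 1 := by
    rw [← measure_union Ioi_disjoint_Iio_same.symm measurableSet_Ioi, Iio_union_Ioi,
      measure_compl (measurableSet_singleton 0) (measure_ne_top _ _), measure_singleton,
      measure_univ, tsub_zero]
  rw [gaussianReal_apply_eq_preimage_add, preimage_add_const_Ioi, sub_self]
  exact ENNReal.eq_inv_of_mul_eq_one_left (by rw [mul_two, ← htotal, hsymm])

lemma gaussianPDFReal_eq_exp_mul (m : ℝ) (v : ℝ≥0) (w : ℝ) :
    gaussianPDFReal m v w = exp ((m * w - m ^ 2 / 2) / v) * gaussianPDFReal 0 v w := by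
  rw [gaussianPDFReal, gaussianPDFReal, mul_left_comm, ← exp_add]
  congr 2
  rcases eq_or_ne (v : ℝ) 0 with hv | hv
  · simp [hv]
  · field_simp
    ring

lemma gaussianPDFReal_le (m : ℝ) (v : ℝ≥0) (w : ℝ) :
    gaussianPDFReal m v w ≤ (√(2 * π * v))⁻¹ := by
  refine mul_le_of_le_one_right (by positivity) (exp_le_one_iff.2 ?_)
  rw [neg_div]
  exact neg_nonpos.2 (by positivity)

lemma gaussianReal_le_smul_volume (m : ℝ) {v : ℝ≥0} (hv : v ≠ 0) :
    gaussianReal m v ≤ ENNReal.ofReal (√(2 * π * v))⁻¹ • volume := by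
  rw [gaussianReal_of_var_ne_zero m hv, ← withDensity_const]
  exact withDensity_mono (.of_forall fun w => ENNReal.ofReal_le_ofReal (gaussianPDFReal_le m v w))

lemma gaussianReal_restrict_le_smul {m₁ m₂ : ℝ} {v : ℝ≥0} (hv : v ≠ 0) {s : Set ℝ}
    (hs : MeasurableSet s) {c : ℝ}
    (h : ∀ w ∈ s, gaussianPDFReal m₁ v w ≤ c * gaussianPDFReal m₂ v w) :
    (gaussianReal m₁ v).restrict s ≤ ENNReal.ofReal c • gaussianReal m₂ v := by
  rw [gaussianReal_of_var_ne_zero _ hv, gaussianReal_of_var_ne_zero _ hv, restrict_withDensity hs]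
  calc (volume.restrict s).withDensity (gaussianPDF m₁ v)
      ≤ (volume.restrict s).withDensity (ENNReal.ofReal c • gaussianPDF m₂ v) := by
        refine withDensity_mono ((ae_restrict_mem hs).mono fun w hw => ?_)
        rw [Pi.smul_apply, smul_eq_mul, gaussianPDF, gaussianPDF,
          ← ENNReal.ofReal_mul' (gaussianPDFReal_nonneg _ _ _)]
        exact ENNReal.ofReal_le_ofReal (h w hw)
    _ = ENNReal.ofReal c • (volume.restrict s).withDensity (gaussianPDF m₂ v) :=
        withDensity_smul _ (measurable_gaussianPDF _ _)
    _ ≤ ENNReal.ofReal c • volume.withDensity (gaussianPDF m₂ v) := by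
        rw [← restrict_withDensity hs]
        exact Measure.le_iff'.2 fun t => mul_le_mul_right (Measure.restrict_le_self t) _

lemma gaussianReal_Ioi_le_exp {v : ℝ≥0} (hv : v ≠ 0) {a : ℝ} (ha : 0 ≤ a) :
    gaussianReal 0 v (Ioi a) ≤ ENNReal.ofReal (exp (-a ^ 2 / (2 * v)) / 2) := by
  have hdens (w : ℝ) (hw : w ∈ Ioi a) :
      gaussianPDFReal 0 v w ≤ exp (-a ^ 2 / (2 * v)) * gaussianPDFReal a v w := by
    rw [gaussianPDFReal_eq_exp_mul a, ← mul_assoc, ← exp_add]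
    refine le_mul_of_one_le_left (gaussianPDFReal_nonneg _ _ _) (one_le_exp ?_)
    have hexponent : -a ^ 2 / (2 * v) + (a * w - a ^ 2 / 2) / v = a * (w - a) / v := by ring
    rw [hexponent]
    exact div_nonneg (mul_nonneg ha (sub_nonneg.2 (le_of_lt hw))) v.2
  calc gaussianReal 0 v (Ioi a) = (gaussianReal 0 v).restrict (Ioi a) (Ioi a) := by
        rw [Measure.restrict_apply_self]
    _ ≤ ENNReal.ofReal (exp (-a ^ 2 / (2 * v))) * gaussianReal a v (Ioi a) :=
        gaussianReal_restrict_le_smul hv measurableSet_Ioi hdens _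
    _ = ENNReal.ofReal (exp (-a ^ 2 / (2 * v)) / 2) := by
        rw [gaussianReal_Ioi_self a hv, ENNReal.ofReal_div_of_pos two_pos, ENNReal.ofReal_ofNat]
        rfl

lemma gaussianReal_Ioi_le_half_add {v : ℝ≥0} (hv : v ≠ 0) {a : ℝ} (ha : a ≤ 0) :
    gaussianReal 0 v (Ioi a) ≤ ENNReal.ofReal (1 / 2 + -a * (√(2 * π * v))⁻¹) := by
  rw [← Ioc_union_Ioi_eq_Ioi ha]
  calc gaussianReal 0 v (Ioc a 0 ∪ Ioi 0)
      ≤ gaussianReal 0 v (Ioc a 0) + gaussianReal 0 v (Ioi 0) := measure_union_le _ _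
    _ ≤ ENNReal.ofReal (√(2 * π * v))⁻¹ * volume (Ioc a 0) + 2⁻¹ := by
        gcongr
        · exact gaussianReal_le_smul_volume 0 hv _
        · exact (gaussianReal_Ioi_self 0 hv).le
    _ = ENNReal.ofReal (1 / 2) + ENNReal.ofReal (-a * (√(2 * π * v))⁻¹) := by
        rw [add_comm, Real.volume_Ioc, zero_sub, ← ENNReal.ofReal_mul (by positivity), mul_comm,
          one_div, ENNReal.ofReal_inv_of_pos two_pos, ENNReal.ofReal_ofNat]
    _ = ENNReal.ofReal (1 / 2 + -a * (√(2 * π * v))⁻¹) :=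
        (ENNReal.ofReal_add (by norm_num) (mul_nonneg (neg_nonneg.2 ha) (by positivity))).symm

/-- The noise variance of the Gaussian mechanism for a statistic of sensitivity `Δ`
(Dwork–Roth, *The Algorithmic Foundations of Differential Privacy*, Thm. A.1). -/
noncomputable def gaussianMechanismVar (Δ ε δ : ℝ) : ℝ := 2 * Δ ^ 2 * log (1.25 / δ) / ε ^ 2

lemma one_fifth_le_log_div {δ : ℝ} (hδ : 0 < δ) (hδ1 : δ ≤ 1) : 1 / 5 ≤ log (1.25 / δ) := by
  have hexp : exp (1 / 5) ≤ 1.25 := by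
    have := exp_bound_div_one_sub_of_interval' (x := 1 / 5) (by norm_num) (by norm_num)
    norm_num at this ⊢
    exact this.le
  rw [le_log_iff_exp_le (by positivity)]
  exact hexp.trans (by rw [le_div_iff₀ hδ]; linarith)

lemma gaussianMechanismVar_pos {Δ ε δ : ℝ} (hΔ : Δ ≠ 0) (hε : ε ≠ 0) (hδ : 0 < δ) (hδ1 : δ ≤ 1) :
    0 < gaussianMechanismVar Δ ε δ := by
  have : 0 < log (1.25 / δ) := by linarith [one_fifth_le_log_div hδ hδ1]
  unfold gaussianMechanismVar
  positivity

lemma gaussianReal_Ioi_le_exp_neg_of_le {Δ ε ℓ : ℝ} (hΔ : 0 < Δ) (hε : 0 < ε) (hε1 : ε ≤ 1)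
    (hℓε : ε ≤ 4 * ℓ) {v : ℝ≥0} (hv : (v : ℝ) = 2 * Δ ^ 2 * ℓ / ε ^ 2) :
    gaussianReal 0 v (Ioi (Δ * (4 * ℓ - ε) / (2 * ε))) ≤ ENNReal.ofReal (1.25 * exp (-ℓ)) := by
  have hℓ : 0 < ℓ := by linarith
  have hv0 : v ≠ 0 := by
    rw [← NNReal.coe_ne_zero, hv]
    positivity
  have hthreshold : 0 ≤ Δ * (4 * ℓ - ε) / (2 * ε) := by
    have := sub_nonneg.2 hℓε
    positivity
  refine (gaussianReal_Ioi_le_exp hv0 hthreshold).trans (ENNReal.ofReal_le_ofReal ?_)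
  have hexponent :
      -(Δ * (4 * ℓ - ε) / (2 * ε)) ^ 2 / (2 * v) = -ℓ + ε / 2 - ε ^ 2 / (16 * ℓ) := by
    rw [hv]
    field_simp
    ring
  have hhalf : exp (1 / 2) ≤ 2 := by
    have := exp_bound_div_one_sub_of_interval' (x := 1 / 2) (by norm_num) (by norm_num)
    norm_num at this ⊢
    exact this.le
  calc exp (-(Δ * (4 * ℓ - ε) / (2 * ε)) ^ 2 / (2 * v)) / 2 ≤ exp (1 / 2 + -ℓ) / 2 := by
        gcongr
        rw [hexponent]
        have : 0 ≤ ε ^ 2 / (16 * ℓ) := by positivity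
        linarith
    _ = exp (1 / 2) / 2 * exp (-ℓ) := by rw [exp_add]; ring
    _ ≤ 1.25 * exp (-ℓ) := by gcongr; linarith

lemma gaussianReal_Ioi_le_exp_neg_of_lt {Δ ε ℓ : ℝ} (hΔ : 0 < Δ) (hε1 : ε ≤ 1) (hℓ : 1 / 5 ≤ ℓ)
    (hℓε : 4 * ℓ < ε) {v : ℝ≥0} (hv : (v : ℝ) = 2 * Δ ^ 2 * ℓ / ε ^ 2) :
    gaussianReal 0 v (Ioi (Δ * (4 * ℓ - ε) / (2 * ε))) ≤ ENNReal.ofReal (1.25 * exp (-ℓ)) := by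
  have hε : 0 < ε := by linarith
  have hv0 : v ≠ 0 := by
    rw [← NNReal.coe_ne_zero, hv]
    have : 0 < ℓ := by linarith
    positivity
  have hthreshold : Δ * (4 * ℓ - ε) / (2 * ε) ≤ 0 :=
    (div_neg_of_neg_of_pos (mul_neg_of_pos_of_neg hΔ (by linarith)) (by positivity)).le
  refine (gaussianReal_Ioi_le_half_add hv0 hthreshold).trans (ENNReal.ofReal_le_ofReal ?_)
  have hsqrt : 0 < √(2 * π * v) := by positivity
  have hthreshold_le : -(Δ * (4 * ℓ - ε) / (2 * ε)) ≤ 1 / 5 * √(2 * π * v) := by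
    calc -(Δ * (4 * ℓ - ε) / (2 * ε)) ≤ 1 / 5 * (Δ / (2 * ε)) := by
          rw [← neg_div, div_le_iff₀ (by positivity)]
          field_simp
          nlinarith
      _ ≤ 1 / 5 * √(2 * π * v) := by
          gcongr
          rw [le_sqrt (by positivity) (by positivity), hv, div_pow, div_le_iff₀ (by positivity)]
          field_simp
          nlinarith [pi_gt_three, sq_nonneg Δ]
  have hexp : 3 / 4 ≤ exp (-ℓ) := by linarith [add_one_le_exp (-ℓ)]
  rw [← div_eq_mul_inv]
  linarith [(div_le_iff₀ hsqrt).2 hthreshold_le]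

theorem gaussianReal_Ioi_le_of_var_eq {Δ ε δ : ℝ} (hΔ : 0 < Δ) (hε : 0 < ε) (hε1 : ε ≤ 1)
    (hδ : 0 < δ) (hδ1 : δ ≤ 1) {v : ℝ≥0} (hv : (v : ℝ) = gaussianMechanismVar Δ ε δ) :
    gaussianReal 0 v (Ioi (ε * v / Δ - Δ / 2)) ≤ ENNReal.ofReal δ := by
  set ℓ := log (1.25 / δ)
  have hδℓ : δ = 1.25 * exp (-ℓ) := by
    rw [exp_neg, exp_log (by positivity)]
    field_simp
  have hthreshold : ε * v / Δ - Δ / 2 = Δ * (4 * ℓ - ε) / (2 * ε) := by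
    rw [hv, gaussianMechanismVar]
    field_simp
    ring
  rw [hthreshold, hδℓ]
  rcases le_or_gt ε (4 * ℓ) with hle | hlt
  · exact gaussianReal_Ioi_le_exp_neg_of_le hΔ hε hε1 hle hv
  · exact gaussianReal_Ioi_le_exp_neg_of_lt hΔ hε1 (one_fifth_le_log_div hδ hδ1) hlt hv

theorem gaussianReal_privacyLoss_tail_le {Δ ε δ : ℝ} (hΔ : 0 < Δ) (hε : 0 < ε) (hε1 : ε ≤ 1)
    (hδ : 0 < δ) (hδ1 : δ ≤ 1) {v : ℝ≥0} (hv : (v : ℝ) = gaussianMechanismVar Δ ε δ)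
    {t : ℝ} (ht : |t| ≤ Δ) :
    gaussianReal t v {w | ε * v + t ^ 2 / 2 < t * w} ≤ ENNReal.ofReal δ := by
  rcases eq_or_ne t 0 with rfl | ht0
  · have hempty : {w : ℝ | ε * v + 0 ^ 2 / 2 < 0 * w} = ∅ := by
      ext w
      simp only [Set.mem_ofPred_eq, zero_mul, mem_empty_iff_false, iff_false, not_lt]
      positivity
    rw [hempty, measure_empty]
    exact zero_le
  have hpre : (· + t) ⁻¹' {w | ε * v + t ^ 2 / 2 < t * w} = {z | ε * v - t ^ 2 / 2 < t * z} := by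
    ext z
    simp only [Set.mem_preimage, Set.mem_ofPred_eq]
    constructor <;> intro h <;> linarith
  have hthreshold : ε * v / Δ - Δ / 2 ≤ (ε * v - t ^ 2 / 2) / |t| := by
    have hεv : ε * v / Δ ≤ ε * v / |t| :=
      div_le_div_of_nonneg_left (by positivity) (abs_pos.2 ht0) ht
    have hsplit : (ε * v - t ^ 2 / 2) / |t| = ε * v / |t| - |t| / 2 := by
      rw [← sq_abs]
      field_simp
    linarith
  rw [gaussianReal_apply_eq_preimage_add, hpre, gaussianReal_setOf_lt_mul v _ ht0]
  exact (measure_mono (Ioi_subset_Ioi hthreshold)).trans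
    (gaussianReal_Ioi_le_of_var_eq hΔ hε hε1 hδ hδ1 hv)

theorem gaussianReal_le_exp_mul_add_of_abs_le {Δ ε δ : ℝ} (hΔ : 0 < Δ) (hε : 0 < ε)
    (hε1 : ε ≤ 1) (hδ : 0 < δ) (hδ1 : δ ≤ 1) {v : ℝ≥0}
    (hv : (v : ℝ) = gaussianMechanismVar Δ ε δ) {t : ℝ} (ht : |t| ≤ Δ) (A : Set ℝ) :
    gaussianReal t v A ≤ ENNReal.ofReal (exp ε) * gaussianReal 0 v A + ENNReal.ofReal δ := by
  have hv0 : v ≠ 0 := by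
    rw [← NNReal.coe_ne_zero, hv]
    exact (gaussianMechanismVar_pos hΔ.ne' hε.ne' hδ hδ1).ne'
  have hloss : (gaussianReal t v).restrict {w | ε * v + t ^ 2 / 2 < t * w}ᶜ
      ≤ ENNReal.ofReal (exp ε) • gaussianReal 0 v := by
    simp only [compl_ofPred, not_lt]
    refine gaussianReal_restrict_le_smul hv0 (measurableSet_le (by fun_prop) (by fun_prop))
      fun w hw => ?_
    rw [gaussianPDFReal_eq_exp_mul t]
    refine mul_le_mul_of_nonneg_right (exp_le_exp.2 ?_) (gaussianPDFReal_nonneg _ _ _)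
    rw [div_le_iff₀ (NNReal.coe_pos.2 (pos_iff_ne_zero.2 hv0))]
    linarith [hw.out]
  exact (measure_le_mul_add_of_restrict_compl_le hloss A).trans
    (add_le_add le_rfl (gaussianReal_privacyLoss_tail_le hΔ hε hε1 hδ hδ1 hv ht))

end ProbabilityTheory

theorem gaussian_mechanism_variance_dp_general
    (n : ℕ) (hn : 2 ≤ n) (μ L : ℝ) (hL : 0 < L)
    (x x' : Fin n → ℝ)
    (hx : ∀ i, x i ∈ Set.Icc (μ - L) (μ + L))
    (hx' : ∀ i, x' i ∈ Set.Icc (μ - L) (μ + L))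
    (hdiff : ∃ i, x i ≠ x' i ∧ ∀ j, j ≠ i → x j = x' j)
    (ε δ : ℝ) (hε : 0 < ε) (hε1 : ε ≤ 1) (hδ : 0 < δ) (hδ1 : δ ≤ 1)
    (σ2DP2 : ℝ≥0) (hσ : (σ2DP2 : ℝ) = 32 * L ^ 4 * Real.log (1.25 / δ) / ε ^ 2)
    (S : Set ℝ) :
    gaussianReal 0 σ2DP2
        {w | (∑ i, (x i) ^ 2) / (n - 1 : ℝ)
              - (∑ i, x i) ^ 2 / ((n : ℝ) * ((n : ℝ) - 1)) + w / n ∈ S}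
      ≤ ENNReal.ofReal (Real.exp ε) *
          gaussianReal 0 σ2DP2
            {w | (∑ i, (x' i) ^ 2) / (n - 1 : ℝ)
                  - (∑ i, x' i) ^ 2 / ((n : ℝ) * ((n : ℝ) - 1)) + w / n ∈ S}
        + ENNReal.ofReal δ := by
  obtain ⟨i, -, hrest⟩ := hdiff
  have hvar (y : Fin n → ℝ) : sampleVariance y
      = (∑ i, (y i) ^ 2) / (n - 1 : ℝ) - (∑ i, y i) ^ 2 / ((n : ℝ) * ((n : ℝ) - 1)) := by
    rw [sampleVariance, Fintype.card_fin]
  rw [← hvar x, ← hvar x']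
  have hsens := abs_card_mul_sampleVariance_sub_le (by rwa [Fintype.card_fin]) hx hx' hrest
  rw [Fintype.card_fin] at hsens
  set t := (n : ℝ) * (sampleVariance x - sampleVariance x')
  have hshift : {w | sampleVariance x + w / n ∈ S}
      = (· + t) ⁻¹' {w | sampleVariance x' + w / n ∈ S} := by
    ext w
    simp only [Set.mem_preimage, Set.mem_ofPred_eq, t]
    congr! 1
    field_simp
    ring
  rw [hshift, ← gaussianReal_apply_eq_preimage_add]
  exact gaussianReal_le_exp_mul_add_of_abs_le (by positivity) hε hε1 hδ hδ1
    (by rw [hσ, gaussianMechanismVar]; ring) hsens _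

/-- Gaussian mechanism guarantee for releasing the unbiased sample variance. -/
theorem gaussian_mechanism_variance_dp
    (n : ℕ) (hn : 2 ≤ n) (μ L : ℝ) (hL : 0 < L)
    (x x' : Fin n → ℝ)
    (hx : ∀ i, x i ∈ Set.Icc (μ - L) (μ + L))
    (hx' : ∀ i, x' i ∈ Set.Icc (μ - L) (μ + L))
    (hdiff : ∃ i, x i ≠ x' i ∧ ∀ j, j ≠ i → x j = x' j)
    (ε δ : ℝ) (hε : 0 < ε) (hε1 : ε ≤ 1) (hδ : 0 < δ) (hδ1 : δ ≤ 1)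
    (σ2DP2 : ℝ≥0) (hσ : (σ2DP2 : ℝ) = 32 * L ^ 4 * Real.log (1.25 / δ) / ε ^ 2)
    (S : Set ℝ) (hS : MeasurableSet S) :
    gaussianReal 0 σ2DP2
        {w | (∑ i, (x i) ^ 2) / (n - 1 : ℝ)
              - (∑ i, x i) ^ 2 / ((n : ℝ) * ((n : ℝ) - 1)) + w / n ∈ S}
      ≤ ENNReal.ofReal (Real.exp ε) *
          gaussianReal 0 σ2DP2
            {w | (∑ i, (x' i) ^ 2) / (n - 1 : ℝ)
                  - (∑ i, x' i) ^ 2 / ((n : ℝ) * ((n : ℝ) - 1)) + w / n ∈ S}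
        + ENNReal.ofReal δ :=
  gaussian_mechanism_variance_dp_general n hn μ L hL x x' hx hx' hdiff ε δ hε hε1 hδ hδ1 σ2DP2 hσ S
end

section
/- Let t ≥ 2 and k ≥ 1 be integers and 0 = τ_0 < τ_1 < ⋯ < τ_k = t be integers, with block lengths d_i = τ_i − τ_{i−1}. Let X_1,…,X_t be i.i.d. square-integrable real random variables with mean μ and variance σ². Let Z_1,…,Z_k be independent square-integrable random variables with mean 0 and variance σ_DP² each, let W_1,…,W_k be independent integrable random variables with mean 0, and assume the X's, Z's, and W's are mutually independent. For i ∈ [k] let S_i = ∑_{j=τ_{i−1}+1}^{τ_i} X_j and Q_i = ∑_{j=τ_{i−1}+1}^{τ_i} X_j², and define V = (1/(t−1)) ∑_{i=1}^k [ Q_i − S_i²/d_i + ((d_i−1)/d_i)·W_i + (S_i + Z_i)²/d_i ] − (t/(t−1)) ( (1/t)(∑_{j=1}^t X_j + ∑_{i=1}^k Z_i) )² − (σ_DP²/(t−1)) ( ∑_{i=1}^k 1/d_i − k/t ). Then E[V] = σ². -/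
/-!
For independent square-integrable summands, `E[(∑ Y)²] = ∑ Var Y + (∑ E Y)²`. Hence in block `i`
(length `d`) the terms `E[S²]` and `E[(S + Z)²]` differ exactly by `σ_DP²`, so the block
contributes `d (σ² + μ²) + σ_DP² / d`, the `W`-term having mean zero. Summing over blocks gives
`t (σ² + μ²) + σ_DP² ∑ 1/d_i`; `t` times the squared overall mean has expectation
`σ² + k σ_DP² / t + t μ²`, and the debiasing term removes what is left of the noise, leaving
`(t - 1) σ² / (t - 1)`.
-/
open MeasureTheory ProbabilityTheory Finset

theorem Finset.sum_Icc_one_sub_pred {M : Type*} [AddCommGroup M] (f : ℕ → M) (k : ℕ) :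
    ∑ i ∈ Icc 1 k, (f i - f (i - 1)) = f k - f 0 := by
  induction k with
  | zero => simp
  | succ k ih => rw [sum_Icc_succ_top (by omega), ih]; simp

lemma ProbabilityTheory.iIndepFun.sum_elim_of_sum_elim_sum_elim {Ω β ι κ ν : Type*}
    [MeasurableSpace Ω] [MeasurableSpace β] {P : Measure Ω}
    {X : ι → Ω → β} {Z : κ → Ω → β} {W : ν → Ω → β}
    (h : iIndepFun (Sum.elim X (Sum.elim Z W)) P) : iIndepFun (Sum.elim X Z) P := by
  convert h.precomp (Sum.map_injective.2 ⟨Function.injective_id, Sum.inl_injective⟩) using 1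
  ext (i | j) <;> rfl

section SecondMoment

variable {Ω : Type*} [MeasurableSpace Ω] {P : Measure Ω} [IsProbabilityMeasure P]

lemma integral_sq_sum_of_iIndepFun {ι : Type*} {Y : ι → Ω → ℝ} (hY : iIndepFun Y P)
    (s : Finset ι) (hmem : ∀ i ∈ s, MemLp (Y i) 2 P) :
    ∫ ω, (∑ i ∈ s, Y i ω) ^ 2 ∂P
      = ∑ i ∈ s, variance (Y i) P + (∑ i ∈ s, ∫ ω, Y i ω ∂P) ^ 2 := by
  have hvar : variance (∑ i ∈ s, Y i) P = ∑ i ∈ s, variance (Y i) P :=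
    IndepFun.variance_sum hmem fun i _ j _ hij => hY.indepFun hij
  have hmean : ∫ ω, ∑ i ∈ s, Y i ω ∂P = ∑ i ∈ s, ∫ ω, Y i ω ∂P :=
    integral_finsetSum s fun i hi => (hmem i hi).integrable one_le_two
  have := variance_eq_sub (memLp_finsetSum' s hmem)
  simp only [Finset.sum_apply, Pi.pow_apply, hvar, hmean] at this
  linarith

lemma integral_sq_sum_add_sum_of_iIndepFun {ι κ : Type*} {X : ι → Ω → ℝ} {Z : κ → Ω → ℝ}
    (hXZ : iIndepFun (Sum.elim X Z) P)
    (hXmem : ∀ i, MemLp (X i) 2 P) (hZmem : ∀ j, MemLp (Z j) 2 P)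
    {μ ν σ2 ρ2 : ℝ} (hXmean : ∀ i, ∫ ω, X i ω ∂P = μ) (hXvar : ∀ i, variance (X i) P = σ2)
    (hZmean : ∀ j, ∫ ω, Z j ω ∂P = ν) (hZvar : ∀ j, variance (Z j) P = ρ2)
    (u : Finset ι) (v : Finset κ) :
    ∫ ω, (∑ i ∈ u, X i ω + ∑ j ∈ v, Z j ω) ^ 2 ∂P
      = #u * σ2 + #v * ρ2 + (#u * μ + #v * ν) ^ 2 := by
  have := integral_sq_sum_of_iIndepFun hXZ (u.disjSum v)
    (by rintro (i | j) _ <;> simp [hXmem, hZmem])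
  simpa [sum_disjSum, hXmean, hXvar, hZmean, hZvar] using this

end SecondMoment

section Block

variable {Ω ι κ : Type*} [MeasurableSpace Ω] {P : Measure Ω}
  {X : ι → Ω → ℝ} {Z : κ → Ω → ℝ} {W : Ω → ℝ}

lemma integrable_block_release (hXmem : ∀ i, MemLp (X i) 2 P) (hZmem : ∀ j, MemLp (Z j) 2 P)
    (hW : Integrable W P) (u : Finset ι) (j : κ) (d : ℝ) :
    Integrable (fun ω => (∑ i ∈ u, X i ω ^ 2) - (∑ i ∈ u, X i ω) ^ 2 / d
      + ((d - 1) / d) * W ω + ((∑ i ∈ u, X i ω) + Z j ω) ^ 2 / d) P := by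
  have hS : MemLp (fun ω => ∑ i ∈ u, X i ω) 2 P := memLp_finsetSum u fun i _ => hXmem i
  exact (((integrable_finsetSum u fun i _ => (hXmem i).integrable_sq).sub
    (hS.integrable_sq.div_const d)).add (hW.const_mul _)).add
    ((hS.add (hZmem j)).integrable_sq.div_const d)

lemma integral_block_release [IsProbabilityMeasure P] (hXZ : iIndepFun (Sum.elim X Z) P)
    (hXmem : ∀ i, MemLp (X i) 2 P) (hZmem : ∀ j, MemLp (Z j) 2 P)
    {μ σ2 ρ2 : ℝ} (hXmean : ∀ i, ∫ ω, X i ω ∂P = μ) (hXvar : ∀ i, variance (X i) P = σ2)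
    (hZmean : ∀ j, ∫ ω, Z j ω ∂P = 0) (hZvar : ∀ j, variance (Z j) P = ρ2)
    (hW : Integrable W P) (hWmean : ∫ ω, W ω ∂P = 0)
    (u : Finset ι) (j : κ) {d : ℝ} (hd : (#u : ℝ) = d) :
    ∫ ω, (∑ i ∈ u, X i ω ^ 2) - (∑ i ∈ u, X i ω) ^ 2 / d
      + ((d - 1) / d) * W ω + ((∑ i ∈ u, X i ω) + Z j ω) ^ 2 / d ∂P
      = d * (σ2 + μ ^ 2) + ρ2 / d := by
  have hS : MemLp (fun ω => ∑ i ∈ u, X i ω) 2 P := memLp_finsetSum u fun i _ => hXmem i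
  have hQ : ∫ ω, ∑ i ∈ u, X i ω ^ 2 ∂P = d * (σ2 + μ ^ 2) := by
    have hX2 : ∀ i, ∫ ω, X i ω ^ 2 ∂P = σ2 + μ ^ 2 := fun i => by
      have := variance_eq_sub (hXmem i)
      simp only [Pi.pow_apply, hXvar, hXmean] at this
      linarith
    rw [integral_finsetSum u fun i _ => (hXmem i).integrable_sq]
    simp only [hX2, sum_const, nsmul_eq_mul, hd]
  have hS2 := integral_sq_sum_add_sum_of_iIndepFun hXZ hXmem hZmem hXmean hXvar hZmean hZvar u ∅
  have hSZ2 := integral_sq_sum_add_sum_of_iIndepFun hXZ hXmem hZmem hXmean hXvar hZmean hZvar u {j}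
  simp only [sum_empty, sum_singleton, add_zero, card_empty, card_singleton, hd] at hS2 hSZ2
  have hQi : Integrable (fun ω => ∑ i ∈ u, X i ω ^ 2) P :=
    integrable_finsetSum u fun i _ => (hXmem i).integrable_sq
  have hS2i : Integrable (fun ω => (∑ i ∈ u, X i ω) ^ 2 / d) P := hS.integrable_sq.div_const d
  have hSZ2i : Integrable (fun ω => (∑ i ∈ u, X i ω + Z j ω) ^ 2 / d) P :=
    (hS.add (hZmem j)).integrable_sq.div_const d
  rw [integral_add (by exact (hQi.sub hS2i).add (hW.const_mul _)) hSZ2i,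
    integral_add (by exact hQi.sub hS2i) (hW.const_mul _), integral_sub hQi hS2i, integral_div,
    integral_div, integral_const_mul, hQ, hS2, hSZ2, hWmean]
  ring

end Block

theorem released_sample_variance_unbiased_general
    (Ω : Type*) [MeasurableSpace Ω] (P : Measure Ω) [IsProbabilityMeasure P]
    (t k : ℕ) (ht : 2 ≤ t)
    (τ : ℕ → ℕ) (hτ0 : τ 0 = 0) (hτk : τ k = t) (hτmono : ∀ i < k, τ i < τ (i + 1))
    (μ σ2 σDP2 : ℝ)
    (X Z W : ℕ → Ω → ℝ)
    (hindep : iIndepFun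
      (Sum.elim X (Sum.elim Z W) : ℕ ⊕ (ℕ ⊕ ℕ) → Ω → ℝ) P)
    (hXmem : ∀ j, MemLp (X j) 2 P)
    (hXmean : ∀ j, ∫ ω, X j ω ∂P = μ)
    (hXvar : ∀ j, variance (X j) P = σ2)
    (hZmem : ∀ i, MemLp (Z i) 2 P)
    (hZmean : ∀ i, ∫ ω, Z i ω ∂P = 0)
    (hZvar : ∀ i, variance (Z i) P = σDP2)
    (hWint : ∀ i, Integrable (W i) P)
    (hWmean : ∀ i, ∫ ω, W i ω ∂P = 0) :
    ∫ ω,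
      ((1 / ((t : ℝ) - 1)) * ∑ i ∈ Icc 1 k,
          ((∑ j ∈ Icc (τ (i - 1) + 1) (τ i), (X j ω) ^ 2)
            - (∑ j ∈ Icc (τ (i - 1) + 1) (τ i), X j ω) ^ 2 / ((τ i : ℝ) - (τ (i - 1) : ℝ))
            + (((τ i : ℝ) - (τ (i - 1) : ℝ) - 1) / ((τ i : ℝ) - (τ (i - 1) : ℝ))) * W i ω
            + ((∑ j ∈ Icc (τ (i - 1) + 1) (τ i), X j ω) + Z i ω) ^ 2
                / ((τ i : ℝ) - (τ (i - 1) : ℝ)))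
        - ((t : ℝ) / ((t : ℝ) - 1)) *
            ((1 / (t : ℝ)) * ((∑ j ∈ Icc 1 t, X j ω) + ∑ i ∈ Icc 1 k, Z i ω)) ^ 2
        - (σDP2 / ((t : ℝ) - 1)) *
            ((∑ i ∈ Icc 1 k, 1 / ((τ i : ℝ) - (τ (i - 1) : ℝ))) - (k : ℝ) / (t : ℝ))) ∂P
      = σ2 := by
  have ht0 : (t : ℝ) ≠ 0 := by positivity
  have ht1 : (t : ℝ) - 1 ≠ 0 := sub_ne_zero.2 (by exact_mod_cast (by omega : t ≠ 1))
  have hXZ : iIndepFun (Sum.elim X Z) P := hindep.sum_elim_of_sum_elim_sum_elim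
  have hd : ∀ i ∈ Icc 1 k, (#(Icc (τ (i - 1) + 1) (τ i)) : ℝ) = τ i - τ (i - 1) := by
    intro i hi
    have := hτmono (i - 1) (by grind)
    rw [Nat.card_Icc, Nat.add_sub_add_right, Nat.cast_sub (by grind)]
  have hlen : ∑ i ∈ Icc 1 k, ((τ i : ℝ) - τ (i - 1)) = t := by
    rw [sum_Icc_one_sub_pred (fun i => (τ i : ℝ)), hτk, hτ0]; simp
  have hmean_sq := integral_sq_sum_add_sum_of_iIndepFun hXZ hXmem hZmem hXmean hXvar hZmean hZvar
    (Icc 1 t) (Icc 1 k)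
  simp only [Nat.card_Icc, Nat.add_sub_cancel, mul_zero, add_zero] at hmean_sq
  have hmean_int : Integrable
      (fun ω => ((1 / (t : ℝ)) * ((∑ j ∈ Icc 1 t, X j ω) + ∑ i ∈ Icc 1 k, Z i ω)) ^ 2) P :=
    (((memLp_finsetSum _ fun j _ => hXmem j).add
      (memLp_finsetSum _ fun i _ => hZmem i)).const_mul _).integrable_sq
  have hblock_int := fun i (_ : i ∈ Icc 1 k) => integrable_block_release hXmem hZmem (hWint i)
    (Icc (τ (i - 1) + 1) (τ i)) i ((τ i : ℝ) - τ (i - 1))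
  have hblock := fun i hi => integral_block_release hXZ hXmem hZmem hXmean hXvar hZmean hZvar
    (hWint i) (hWmean i) (Icc (τ (i - 1) + 1) (τ i)) i (hd i hi)
  have hsum_int := (integrable_finsetSum _ hblock_int).const_mul (1 / ((t : ℝ) - 1))
  rw [integral_sub (by exact hsum_int.sub (hmean_int.const_mul _)) (integrable_const _),
    integral_sub (by exact hsum_int) (hmean_int.const_mul _), integral_const_mul,
    integral_const_mul, integral_finsetSum _ hblock_int, sum_congr rfl hblock, integral_const]
  simp_rw [mul_pow]
  rw [integral_const_mul, hmean_sq, sum_add_distrib, ← sum_mul, hlen, probReal_univ, one_smul]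
  simp only [div_eq_mul_inv σDP2, ← mul_sum, one_div]
  field_simp
  ring

/-- The privatized sample-variance release of the first data-variance estimation scheme
is an unbiased estimator of the data variance `σ²`. -/
theorem released_sample_variance_unbiased
    (Ω : Type*) [MeasurableSpace Ω] (P : Measure Ω) [IsProbabilityMeasure P]
    (t k : ℕ) (ht : 2 ≤ t) (hk : 1 ≤ k)
    (τ : ℕ → ℕ) (hτ0 : τ 0 = 0) (hτk : τ k = t) (hτmono : ∀ i < k, τ i < τ (i + 1))
    (μ σ2 σDP2 : ℝ)
    (X Z W : ℕ → Ω → ℝ)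
    (hindep : iIndepFun
      (Sum.elim X (Sum.elim Z W) : ℕ ⊕ (ℕ ⊕ ℕ) → Ω → ℝ) P)
    (hXmem : ∀ j, MemLp (X j) 2 P)
    (hXid : ∀ i j, IdentDistrib (X i) (X j) P P)
    (hXmean : ∀ j, ∫ ω, X j ω ∂P = μ)
    (hXvar : ∀ j, variance (X j) P = σ2)
    (hZmem : ∀ i, MemLp (Z i) 2 P)
    (hZmean : ∀ i, ∫ ω, Z i ω ∂P = 0)
    (hZvar : ∀ i, variance (Z i) P = σDP2)
    (hWint : ∀ i, Integrable (W i) P)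
    (hWmean : ∀ i, ∫ ω, W i ω ∂P = 0) :
    ∫ ω,
      ((1 / ((t : ℝ) - 1)) * ∑ i ∈ Icc 1 k,
          ((∑ j ∈ Icc (τ (i - 1) + 1) (τ i), (X j ω) ^ 2)
            - (∑ j ∈ Icc (τ (i - 1) + 1) (τ i), X j ω) ^ 2 / ((τ i : ℝ) - (τ (i - 1) : ℝ))
            + (((τ i : ℝ) - (τ (i - 1) : ℝ) - 1) / ((τ i : ℝ) - (τ (i - 1) : ℝ))) * W i ω
            + ((∑ j ∈ Icc (τ (i - 1) + 1) (τ i), X j ω) + Z i ω) ^ 2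
                / ((τ i : ℝ) - (τ (i - 1) : ℝ)))
        - ((t : ℝ) / ((t : ℝ) - 1)) *
            ((1 / (t : ℝ)) * ((∑ j ∈ Icc 1 t, X j ω) + ∑ i ∈ Icc 1 k, Z i ω)) ^ 2
        - (σDP2 / ((t : ℝ) - 1)) *
            ((∑ i ∈ Icc 1 k, 1 / ((τ i : ℝ) - (τ (i - 1) : ℝ))) - (k : ℝ) / (t : ℝ))) ∂P
      = σ2 :=
  released_sample_variance_unbiased_general Ω P t k ht τ hτ0 hτk hτmono μ σ2 σDP2 X Z W hindep hXmem
    hXmean hXvar hZmem hZmean hZvar hWint hWmean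
end
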